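/- arXiv:2107.06331 — 2 statements merged into one kernel-verified Lean document; each statement's English description precedes it below -/
import Mathlib

section
/- Let n ≥ 1, let b : {0,…,n} → ℝ be nondecreasing with b(0) = 0, b(1) = 1 and b(x) > 0 for x ≥ 1, let F : {1,…,n} → ℝ be nondecreasing with F(1) = 1, let y* ∈ {0,…,n−1} and ε > 0. Consider the congestion game with users N = {1,…,n} and resources {e_0, e_1, …, e_{n−y*}} in which each user i ≤ n−y* has action set {{e_0}, {e_i}} and each user i > n−y* has the single action {e_0}; resource e_0 has cost function b and incentive F − b (so its cost-plus-incentive is F), and each resource e_k with k ≥ 1 has cost function (F(n)+ε)·b and incentive (F(n)+ε)·(F − b). Then: (i) the assignment ā in which every user selects e_0 is the unique pure Nash equilibrium; (ii) SC(ā) = b(n)·n; (iii) the assignment a* in which each user i ≤ n−y* selects e_i and the remaining users select e_0 has SC(a*) = (n−y*)·(F(n)+ε) + b(y*)·y* (with the convention b(0)·0 = 0); consequently min_{a∈NE} SC(a)/MinCost ≥ b(n)·n / [(n−y*)·(F(n)+ε) + b(y*)·y*]. -/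
open scoped BigOperators ENNReal

noncomputable section

/-- A congestion game with incentives: `n` users, `R` resources,
finite nonempty action sets `act i ⊆ 2^E`, resource cost functions `cost e`
and incentive functions `tax e`. -/
structure CGame where
  n : ℕ
  R : ℕ
  act : Fin n → Finset (Finset (Fin R))
  act_ne : ∀ i, (act i).Nonempty
  cost : Fin R → ℕ → ℝ
  tax : Fin R → ℕ → ℝ

namespace CGame

variable (G : CGame)

/-- An assignment of actions (not necessarily feasible). -/
abbrev Assign := Fin G.n → Finset (Fin G.R)

/-- Feasibility of an assignment. -/
def IsAssign (a : G.Assign) : Prop := ∀ i, a i ∈ G.act i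

/-- The load `|a|_e`: the number of users selecting resource `e`. -/
def load (a : G.Assign) (e : Fin G.R) : ℕ :=
  (Finset.univ.filter fun i => e ∈ a i).card

/-- The social cost `SC(a)`. -/
def SC (a : G.Assign) : ℝ := ∑ i, ∑ e ∈ a i, G.cost e (G.load a e)

/-- The cost `C_i(a)` experienced by user `i` (resource costs plus incentives). -/
def userCost (i : Fin G.n) (a : G.Assign) : ℝ :=
  ∑ e ∈ a i, (G.cost e (G.load a e) + G.tax e (G.load a e))

/-- Pure Nash equilibrium. -/
def IsNE (a : G.Assign) : Prop :=
  G.IsAssign a ∧ ∀ i : Fin G.n, ∀ s ∈ G.act i,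
    G.userCost i a ≤ G.userCost i (Function.update a i s)

/-- The Rosenthal potential of the game with incentives. -/
def potential (a : G.Assign) : ℝ :=
  ∑ e, ∑ k ∈ Finset.Icc 1 (G.load a e), (G.cost e k + G.tax e k)

/-- The minimum achievable social cost. -/
def MinCost : ℝ := sInf {c | ∃ a, G.IsAssign a ∧ G.SC a = c}

end CGame

/-- The lower-bound congestion game construction: users `N = {1,…,n}` and
resources `{e_0, e_1, …, e_{n−y*}}`; each user `i ≤ n−y*` chooses between
`{e_0}` and `{e_i}`, each user `i > n−y*` only has action `{e_0}`. Resource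
`e_0` has cost `b` and incentive `F − b`; each `e_k`, `k ≥ 1`, has cost
`(F(n)+ε)·b` and incentive `(F(n)+ε)·(F − b)`. -/
def lbGame (n ystar : ℕ) (b F : ℕ → ℝ) (ε : ℝ) : CGame where
  n := n
  R := n - ystar + 1
  act := fun i =>
    if h : (i : ℕ) < n - ystar then
      {{(0 : Fin (n - ystar + 1))}, {(⟨(i : ℕ) + 1, by omega⟩ : Fin (n - ystar + 1))}}
    else
      {{(0 : Fin (n - ystar + 1))}}
  act_ne := fun i => by
    by_cases h : (i : ℕ) < n - ystar <;> simp [h]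
  cost := fun e x => if (e : ℕ) = 0 then b x else (F n + ε) * b x
  tax := fun e x => if (e : ℕ) = 0 then F x - b x else (F n + ε) * (F x - b x)

/-- The assignment in which every user selects `e_0`. -/
def lbEq (n ystar : ℕ) (b F : ℕ → ℝ) (ε : ℝ) : (lbGame n ystar b F ε).Assign :=
  fun _ => {(⟨0, Nat.succ_pos _⟩ : Fin (n - ystar + 1))}

/-- The assignment in which each user `i ≤ n−y*` selects `e_i` and the
remaining users select `e_0`. -/
def lbOpt (n ystar : ℕ) (b F : ℕ → ℝ) (ε : ℝ) : (lbGame n ystar b F ε).Assign :=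
  fun i =>
    if h : (i : ℕ) < n - ystar then
      {(⟨(i : ℕ) + 1, by omega⟩ : Fin (n - ystar + 1))}
    else
      {(⟨0, Nat.succ_pos _⟩ : Fin (n - ystar + 1))}

/-! On `e_0` a user pays `F` of the load, hence at most `F(n)`; on a private resource `e_i` she
pays `(F(n)+ε)·F(load) ≥ F(n)+ε`, because `F ≥ F(1) = 1`. So nobody gains by leaving `ā`, and in
any equilibrium a user on `e_i` would gain by moving to `e_0`: `ā` is the unique equilibrium.
Every feasible assignment has positive social cost, so `MinCost` is a positive minimum, at most
`SC(a*)`, which gives the ratio bound. -/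

namespace CGame

variable {G : CGame}

lemma load_mem_Icc {a : G.Assign} {e : Fin G.R} {i : Fin G.n} (h : e ∈ a i) :
    G.load a e ∈ Set.Icc 1 G.n :=
  ⟨Finset.card_pos.mpr ⟨i, by simp [h]⟩,
    by simpa [load] using Finset.card_filter_le Finset.univ (e ∈ a ·)⟩

lemma userCost_of_eq_singleton {a : G.Assign} {i : Fin G.n} {e : Fin G.R} (h : a i = {e}) :
    G.userCost i a = G.cost e (G.load a e) + G.tax e (G.load a e) := by
  simp [userCost, h]

lemma finite_SC_values : {c | ∃ a, G.IsAssign a ∧ G.SC a = c}.Finite :=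
  (Set.finite_range G.SC).subset fun _ ⟨a, _, hc⟩ => ⟨a, hc⟩

lemma exists_isAssign_SC_eq_MinCost : ∃ a, G.IsAssign a ∧ G.SC a = G.MinCost := by
  have hne : {c | ∃ a, G.IsAssign a ∧ G.SC a = c}.Nonempty :=
    ⟨_, fun i => (G.act_ne i).choose, fun i => (G.act_ne i).choose_spec, rfl⟩
  exact hne.csInf_mem finite_SC_values

lemma MinCost_le_SC {a : G.Assign} (ha : G.IsAssign a) : G.MinCost ≤ G.SC a :=
  csInf_le finite_SC_values.bddBelow ⟨a, ha, rfl⟩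

lemma div_SC_le_div_MinCost (hpos : ∀ a, G.IsAssign a → 0 < G.SC a) {a : G.Assign}
    (ha : G.IsAssign a) {c : ℝ} (hc : 0 ≤ c) : c / G.SC a ≤ c / G.MinCost := by
  obtain ⟨a₀, ha₀, hmin⟩ := G.exists_isAssign_SC_eq_MinCost
  exact div_le_div_of_nonneg_left hc (hmin ▸ hpos a₀ ha₀) (MinCost_le_SC ha)

end CGame

section LowerBoundGame

variable {n ystar : ℕ} {b F : ℕ → ℝ} {ε : ℝ}

-- So that `(lbGame …).n` and `(lbGame …).R` unify with `n` and `n - ystar + 1` in `simp`/`rw`.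
attribute [reducible] lbGame

lemma lbGame_cost_add_tax_zero (x : ℕ) :
    (lbGame n ystar b F ε).cost (0 : Fin (n - ystar + 1)) x +
      (lbGame n ystar b F ε).tax (0 : Fin (n - ystar + 1)) x = F x := by
  simp

lemma lbGame_cost_add_tax_of_ne_zero {e : Fin (n - ystar + 1)} (he : e ≠ 0) (x : ℕ) :
    (lbGame n ystar b F ε).cost e x + (lbGame n ystar b F ε).tax e x = (F n + ε) * F x := by
  simp [Fin.val_ne_zero_iff.mpr he]
  ring

lemma lbGame_mem_act_iff {i : Fin n} {s : Finset (Fin (n - ystar + 1))} :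
    s ∈ (lbGame n ystar b F ε).act i ↔
      s = {0} ∨ ∃ h : (i : ℕ) < n - ystar, s = {⟨i + 1, by omega⟩} := by
  change s ∈ (if h : (i : ℕ) < n - ystar then
    ({{0}, {⟨i + 1, by omega⟩}} : Finset (Finset (Fin (n - ystar + 1)))) else {{0}}) ↔ _
  split_ifs with h <;> simp [h]

lemma lbGame_zero_mem_act (i : Fin n) :
    ({0} : Finset (Fin (n - ystar + 1))) ∈ (lbGame n ystar b F ε).act i :=
  lbGame_mem_act_iff.mpr (Or.inl rfl)

lemma lbGame_mem_act {i : Fin n} {s : Finset (Fin (n - ystar + 1))}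
    (hs : s ∈ (lbGame n ystar b F ε).act i) : s = {0} ∨ ∃ e, e ≠ 0 ∧ s = {e} :=
  (lbGame_mem_act_iff.mp hs).imp_right fun ⟨_, hs⟩ => ⟨_, by simp [Fin.ext_iff], hs⟩

lemma lbGame_userCost_le_of_eq_zero (hF : MonotoneOn F (Set.Icc 1 n))
    {a : (lbGame n ystar b F ε).Assign} {i : Fin n} (h : a i = {0}) :
    (lbGame n ystar b F ε).userCost i a ≤ F n := by
  have hload :=
    CGame.load_mem_Icc (h ▸ Finset.mem_singleton_self _ : (0 : Fin (n - ystar + 1)) ∈ a i)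
  rw [CGame.userCost_of_eq_singleton h, lbGame_cost_add_tax_zero]
  exact hF hload ⟨hload.1.trans hload.2, le_rfl⟩ hload.2

lemma lbGame_le_userCost_of_ne_zero (hF : MonotoneOn F (Set.Icc 1 n)) (hF1 : F 1 = 1)
    (hε : 0 ≤ ε) {a : (lbGame n ystar b F ε).Assign} {i : Fin n} {e : Fin (n - ystar + 1)}
    (he : e ≠ 0) (h : a i = {e}) : F n + ε ≤ (lbGame n ystar b F ε).userCost i a := by
  have hload := CGame.load_mem_Icc (h ▸ Finset.mem_singleton_self e : e ∈ a i)
  have hn : 1 ≤ n := hload.1.trans hload.2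
  have h1F : ∀ k ∈ Set.Icc 1 n, 1 ≤ F k := fun k hk => hF1 ▸ hF ⟨le_rfl, hn⟩ hk hk.1
  rw [CGame.userCost_of_eq_singleton h, lbGame_cost_add_tax_of_ne_zero he]
  exact le_mul_of_one_le_right (by linarith [h1F n ⟨hn, le_rfl⟩]) (h1F _ hload)

lemma lbEq_apply (i : Fin n) : lbEq n ystar b F ε i = ({0} : Finset (Fin (n - ystar + 1))) :=
  rfl

lemma load_lbEq_zero : (lbGame n ystar b F ε).load (lbEq n ystar b F ε) 0 = n := by
  simp [CGame.load, lbEq]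

lemma userCost_lbEq (i : Fin n) :
    (lbGame n ystar b F ε).userCost i (lbEq n ystar b F ε) = F n := by
  rw [CGame.userCost_of_eq_singleton (lbEq_apply i),
    lbGame_cost_add_tax_zero, load_lbEq_zero]

lemma lbEq_isNE (hF : MonotoneOn F (Set.Icc 1 n)) (hF1 : F 1 = 1) (hε : 0 < ε) :
    (lbGame n ystar b F ε).IsNE (lbEq n ystar b F ε) := by
  refine ⟨fun i => lbGame_zero_mem_act i, fun i s hs => ?_⟩
  rcases lbGame_mem_act hs with rfl | ⟨e, he, rfl⟩
  · rw [Function.update_eq_self_iff.mpr (lbEq_apply i).symm]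
  · have := lbGame_le_userCost_of_ne_zero hF hF1 hε.le he
      (Function.update_self i {e} (lbEq n ystar b F ε))
    rw [userCost_lbEq]
    linarith

lemma eq_lbEq_of_isNE (hF : MonotoneOn F (Set.Icc 1 n)) (hF1 : F 1 = 1) (hε : 0 < ε)
    {a : (lbGame n ystar b F ε).Assign} (ha : (lbGame n ystar b F ε).IsNE a) :
    a = lbEq n ystar b F ε := by
  funext i
  rcases lbGame_mem_act (ha.1 i) with h | ⟨e, he, h⟩
  · exact h
  · have hdev := ha.2 i {0} (lbGame_zero_mem_act i)
    have := lbGame_le_userCost_of_ne_zero hF hF1 hε.le he h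
    have := lbGame_userCost_le_of_eq_zero hF (Function.update_self i _ a)
    exfalso
    linarith

lemma SC_lbEq : (lbGame n ystar b F ε).SC (lbEq n ystar b F ε) = b n * n := by
  simp [CGame.SC, lbEq, load_lbEq_zero, lbGame, mul_comm]

lemma lbGame_cost_pos (hb : ∀ x, 1 ≤ x → x ≤ n → 0 < b x) (hFε : 0 < F n + ε)
    (e : Fin (n - ystar + 1)) {x : ℕ} (hx : x ∈ Set.Icc 1 n) :
    0 < (lbGame n ystar b F ε).cost e x := by
  have := hb x hx.1 hx.2
  by_cases he : (e : ℕ) = 0 <;> simp [he] <;> positivity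

lemma lbGame_SC_pos (hb : ∀ x, 1 ≤ x → x ≤ n → 0 < b x) (hFε : 0 < F n + ε) (hn : 0 < n)
    {a : (lbGame n ystar b F ε).Assign} (ha : (lbGame n ystar b F ε).IsAssign a) :
    0 < (lbGame n ystar b F ε).SC a := by
  have : Nonempty (Fin n) := ⟨⟨0, hn⟩⟩
  refine Finset.sum_pos (fun i _ => ?_) Finset.univ_nonempty
  obtain ⟨e, he⟩ : ∃ e, a i = {e} := by
    rcases lbGame_mem_act (ha i) with h | ⟨e, -, h⟩ <;> exact ⟨_, h⟩
  rw [he, Finset.sum_singleton]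
  exact lbGame_cost_pos hb hFε e (CGame.load_mem_Icc (he ▸ Finset.mem_singleton_self e))

lemma zero_mem_lbOpt_iff {j : Fin n} :
    (0 : Fin (n - ystar + 1)) ∈ lbOpt n ystar b F ε j ↔ ¬ (j : ℕ) < n - ystar := by
  unfold lbOpt
  split_ifs with h <;> simp [h, Fin.ext_iff]

lemma succ_mem_lbOpt_iff {i j : Fin n} (hi : (i : ℕ) < n - ystar) :
    (⟨i + 1, by omega⟩ : Fin (n - ystar + 1)) ∈ lbOpt n ystar b F ε j ↔ j = i := by
  unfold lbOpt
  split_ifs with h <;> simp [Fin.ext_iff] <;> omega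

lemma card_filter_not_val_lt_sub {m : ℕ} (hm : m ≤ n) :
    (Finset.univ.filter fun j : Fin n => ¬ (j : ℕ) < n - m).card = m := by
  have :=
    Finset.card_filter_add_card_filter_not (s := Finset.univ) fun j : Fin n => (j : ℕ) < n - m
  rw [Fin.card_filter_val_lt, Finset.card_univ, Fintype.card_fin] at this
  omega

lemma load_lbOpt_zero (hy : ystar ≤ n) :
    (lbGame n ystar b F ε).load (lbOpt n ystar b F ε) 0 = ystar := by
  rw [CGame.load, ← Finset.filter_congr fun j _ => zero_mem_lbOpt_iff.symm]
  exact card_filter_not_val_lt_sub hy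

lemma load_lbOpt_succ {i : Fin n} (hi : (i : ℕ) < n - ystar) :
    (lbGame n ystar b F ε).load (lbOpt n ystar b F ε)
      (⟨i + 1, by omega⟩ : Fin (n - ystar + 1)) = 1 := by
  rw [CGame.load, Finset.card_eq_one]
  exact ⟨i, by ext j; simpa using succ_mem_lbOpt_iff hi⟩

lemma lbOpt_isAssign : (lbGame n ystar b F ε).IsAssign (lbOpt n ystar b F ε) := by
  intro i
  unfold lbOpt
  split_ifs with h <;> simp [h]

lemma SC_lbOpt (hb1 : b 1 = 1) (hy : ystar ≤ n) :
    (lbGame n ystar b F ε).SC (lbOpt n ystar b F ε)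
      = ((n : ℝ) - (ystar : ℝ)) * (F n + ε) + b ystar * ystar := by
  have hterm (i : Fin n) : ∑ e ∈ lbOpt n ystar b F ε i,
      (lbGame n ystar b F ε).cost e ((lbGame n ystar b F ε).load (lbOpt n ystar b F ε) e)
        = if (i : ℕ) < n - ystar then F n + ε else b ystar := by
    by_cases h : (i : ℕ) < n - ystar
    · have := load_lbOpt_succ (b := b) (F := F) (ε := ε) h
      simp [lbOpt, h, this, hb1]
    · have := load_lbOpt_zero (b := b) (F := F) (ε := ε) hy
      simp [lbOpt, h, this]
  rw [CGame.SC, Finset.sum_congr rfl fun i _ => hterm i, Finset.sum_ite, Finset.sum_const,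
    Finset.sum_const, Fin.card_filter_val_lt, card_filter_not_val_lt_sub hy,
    min_eq_right (Nat.sub_le n ystar), nsmul_eq_mul, nsmul_eq_mul, Nat.cast_sub hy]
  ring

end LowerBoundGame

theorem lb_game_construction_general (n ystar : ℕ) (hy : ystar < n)
    (b F : ℕ → ℝ) (ε : ℝ) (hε : 0 < ε)
    (hb1 : b 1 = 1)
    (hbpos : ∀ x : ℕ, 1 ≤ x → x ≤ n → 0 < b x)
    (hF1 : F 1 = 1)
    (hFmono : ∀ x : ℕ, 1 ≤ x → x < n → F x ≤ F (x + 1)) :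
    ((lbGame n ystar b F ε).IsNE (lbEq n ystar b F ε) ∧
      ∀ a : (lbGame n ystar b F ε).Assign,
        (lbGame n ystar b F ε).IsNE a → a = lbEq n ystar b F ε) ∧
    (lbGame n ystar b F ε).SC (lbEq n ystar b F ε) = b n * n ∧
    (lbGame n ystar b F ε).SC (lbOpt n ystar b F ε)
      = ((n : ℝ) - (ystar : ℝ)) * (F n + ε) + b ystar * ystar ∧
    ∀ a : (lbGame n ystar b F ε).Assign, (lbGame n ystar b F ε).IsNE a →
      (lbGame n ystar b F ε).SC a / (lbGame n ystar b F ε).MinCost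
        ≥ b n * n / (((n : ℝ) - (ystar : ℝ)) * (F n + ε) + b ystar * ystar) := by
  have hn : 0 < n := Nat.zero_lt_of_lt hy
  have hF : MonotoneOn F (Set.Icc 1 n) :=
    monotoneOn_of_le_add_one Set.ordConnected_Icc fun x _ hx hx1 => hFmono x hx.1 hx1.2
  have hFε : 0 < F n + ε := by linarith [hF1 ▸ hF ⟨le_rfl, hn⟩ ⟨hn, le_rfl⟩ hn]
  have hSC_opt := SC_lbOpt (ε := ε) (F := F) hb1 hy.le
  refine ⟨⟨lbEq_isNE hF hF1 hε, fun a ha => eq_lbEq_of_isNE hF hF1 hε ha⟩, SC_lbEq, hSC_opt,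
    fun a ha => ?_⟩
  rw [eq_lbEq_of_isNE hF hF1 hε ha, SC_lbEq, ← hSC_opt]
  exact CGame.div_SC_le_div_MinCost (fun _ => lbGame_SC_pos hbpos hFε hn) lbOpt_isAssign
    (mul_nonneg (hbpos n hn le_rfl).le n.cast_nonneg)

/-- In the lower-bound construction (for `b` nondecreasing
with `b(0) = 0`, `b(1) = 1`, `b > 0` on `{1,…,n}`, `F` nondecreasing with
`F(1) = 1`, `y* ≤ n−1` and `ε > 0`): (i) the all-`e_0` assignment `ā` is the
unique pure Nash equilibrium; (ii) `SC(ā) = b(n)·n`; (iii) the alternative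
assignment `a*` has `SC(a*) = (n−y*)·(F(n)+ε) + b(y*)·y*`; consequently
(iv) every Nash equilibrium satisfies
`SC(a)/MinCost ≥ b(n)·n / [(n−y*)·(F(n)+ε) + b(y*)·y*]`. -/
theorem lb_game_construction (n ystar : ℕ) (hn : 1 ≤ n) (hy : ystar < n)
    (b F : ℕ → ℝ) (ε : ℝ) (hε : 0 < ε)
    (hb0 : b 0 = 0) (hb1 : b 1 = 1)
    (hbpos : ∀ x : ℕ, 1 ≤ x → x ≤ n → 0 < b x)
    (hbmono : ∀ x : ℕ, x < n → b x ≤ b (x + 1))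
    (hF1 : F 1 = 1)
    (hFmono : ∀ x : ℕ, 1 ≤ x → x < n → F x ≤ F (x + 1)) :
    ((lbGame n ystar b F ε).IsNE (lbEq n ystar b F ε) ∧
      ∀ a : (lbGame n ystar b F ε).Assign,
        (lbGame n ystar b F ε).IsNE a → a = lbEq n ystar b F ε) ∧
    (lbGame n ystar b F ε).SC (lbEq n ystar b F ε) = b n * n ∧
    (lbGame n ystar b F ε).SC (lbOpt n ystar b F ε)
      = ((n : ℝ) - (ystar : ℝ)) * (F n + ε) + b ystar * ystar ∧
    ∀ a : (lbGame n ystar b F ε).Assign, (lbGame n ystar b F ε).IsNE a →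
      (lbGame n ystar b F ε).SC a / (lbGame n ystar b F ε).MinCost
        ≥ b n * n / (((n : ℝ) - (ystar : ℝ)) * (F n + ε) + b ystar * ystar) :=
  lb_game_construction_general n ystar hy b F ε hε hb1 hbpos hF1 hFmono
end
end

section
/- Consider the set 𝒢 of congestion games with at most n users and resource cost functions in 𝓛 for positive basis functions b_1,…,b_m, and let PoA* ≥ 1. Suppose ν > 0, ρ ≥ 1/PoA*, γ ∈ (0,1], κ > 0 and functions F_j : {0,…,n+1} → ℝ with F_j(0) = F_j(n+1) = 0 and b_j(0) = 0 satisfy, for every j ∈ {1,…,m} and every (x,y,z) ∈ I(n): (1/ν)·b_j(y)·y − (ρ/ν)·b_j(x)·x + (x−z)·F_j(x) − (y−z)·F_j(x+1) ≥ 0 and b_j(y)·y − γ·b_j(x)·x + (x−z)·F_j(x) − (y−z)·F_j(x+1) + κ·[Σ_{k=1}^x F_j(k) − Σ_{k=1}^y F_j(k)] ≥ 0. Then the linear local incentive mechanism T with T(b_j) = F_j − b_j satisfies PoA(T) ≤ 1/ρ ≤ PoA* and PoS(T) ≤ 1/γ. -/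
open scoped BigOperators ENNReal

noncomputable section

/-- A (local) incentive mechanism: a map from resource cost functions to
incentive functions. -/
abbrev Mech : Type := (ℕ → ℝ) → (ℕ → ℝ)

/-- Membership of a game in the class `𝒢` of congestion games with at most `n`
users, resource cost functions that are nonnegative linear combinations of the
basis functions `b`, and incentives generated by the mechanism `T`. -/
def InClass (n m : ℕ) (b : Fin m → ℕ → ℝ) (T : Mech) (G : CGame) : Prop :=
  G.n ≤ n ∧
  (∀ e, ∃ α : Fin m → ℝ, (∀ j, 0 ≤ α j) ∧ ∀ x, G.cost e x = ∑ j, α j * b j x) ∧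
  (∀ e x, G.tax e x = T (G.cost e) x)

/-- Price of anarchy of mechanism `T` over the class of congestion games with
at most `n` users and costs generated by the basis `b`. -/
def PoA (n m : ℕ) (b : Fin m → ℕ → ℝ) (T : Mech) : ℝ≥0∞ :=
  ⨆ G : CGame, ⨆ _ : InClass n m b T G ∧ 0 < G.MinCost,
    ⨆ a : G.Assign, ⨆ _ : G.IsNE a, ENNReal.ofReal (G.SC a / G.MinCost)

/-- Price of stability of mechanism `T` over the class of congestion games with
at most `n` users and costs generated by the basis `b`. -/
def PoS (n m : ℕ) (b : Fin m → ℕ → ℝ) (T : Mech) : ℝ≥0∞ :=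
  ⨆ G : CGame, ⨆ _ : InClass n m b T G ∧ 0 < G.MinCost,
    ⨅ a : {a : G.Assign // G.IsNE a}, ENNReal.ofReal (G.SC a.1 / G.MinCost)

/-- The marginal cost mechanism `T^mc(ℓ)(x) = (x−1)·[ℓ(x) − ℓ(x−1)]`. -/
def Tmc : Mech := fun ℓ x => ((x : ℝ) - 1) * (ℓ x - ℓ (x - 1))

/-!
By linearity of `T`, a resource with cost `ℓ_e = ∑ α_{e,j} b_j` has cost plus incentive
`f_e = ∑ α_{e,j} F_j`. For an equilibrium `a` and any assignment `o`, let `x_e`, `y_e`, `z_e` be the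
loads of `a`, `o` and `a ⊓ o`. Adding up every user's Nash condition against the deviation to `o i`
gives `∑_e (x_e - z_e) f_e(x_e) - (y_e - z_e) f_e(x_e + 1) ≤ 0`. Each `(x_e, y_e, z_e)` lies in `I(n)`
or is `0`, so the constraints weighted by `α_{e,j} ≥ 0` and summed give `ρ SC(a) ≤ SC(o)`. In the
PoS constraints the extra `κ`-terms add up to `κ (Φ(a) - Φ(o))` for Rosenthal's potential `Φ`, which
is `≤ 0` when `a` minimises `Φ`; such a minimiser exists and is an equilibrium.
-/

namespace CGame

variable (G : CGame)

lemma exists_isAssign : ∃ a, G.IsAssign a :=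
  ⟨fun i => (G.act_ne i).choose, fun i => (G.act_ne i).choose_spec⟩

lemma le_minCost {c : ℝ} (h : ∀ o, G.IsAssign o → c ≤ G.SC o) : c ≤ G.MinCost := by
  obtain ⟨o, ho⟩ := G.exists_isAssign
  exact le_csInf ⟨G.SC o, o, ho, rfl⟩ fun _ ⟨o, ho, hc⟩ => hc ▸ h o ho

lemma load_le (a : G.Assign) (e : Fin G.R) : G.load a e ≤ G.n :=
  (Finset.card_filter_le _ _).trans_eq (Finset.card_fin _)

lemma load_mono {a a' : G.Assign} (h : a ≤ a') (e : Fin G.R) : G.load a e ≤ G.load a' e :=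
  Finset.card_le_card <| Finset.monotone_filter_right _ fun i _ => @h i e

lemma load_inf_add_load_sup (a o : G.Assign) (e : Fin G.R) :
    G.load (a ⊓ o) e + G.load (a ⊔ o) e = G.load a e + G.load o e := by
  simp only [load, Pi.inf_apply, Pi.sup_apply, Finset.inf_eq_inter, Finset.sup_eq_union,
    Finset.mem_inter, Finset.mem_union, Finset.filter_and, Finset.filter_or]
  rw [add_comm, Finset.card_union_add_card_inter]

lemma sum_sum_eq_sum_load_mul (a : G.Assign) (f : Fin G.R → ℝ) :
    ∑ i, ∑ e ∈ a i, f e = ∑ e, (G.load a e : ℝ) * f e := by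
  simp only [load, ← nsmul_eq_mul, ← Finset.sum_const, Finset.sum_filter]
  rw [Finset.sum_comm]
  simp [Finset.sum_ite_mem]

lemma load_update_add (a : G.Assign) (i : Fin G.n) (s : Finset (Fin G.R)) (e : Fin G.R) :
    G.load (Function.update a i s) e + (if e ∈ a i then 1 else 0)
      = G.load a e + (if e ∈ s then 1 else 0) := by
  simp only [load, Finset.card_filter]
  rw [Fintype.sum_eq_add_sum_compl i, Fintype.sum_eq_add_sum_compl i (fun k => ite _ _ _),
    Function.update_self]
  have hcompl : ∀ k ∈ ({i}ᶜ : Finset (Fin G.n)), Function.update a i s k = a k :=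
    fun k hk => Function.update_of_ne (by simpa using hk) _ _
  rw [Finset.sum_congr rfl fun k hk => by rw [hcompl k hk]]
  ring

lemma load_update_of_mem (a : G.Assign) (i : Fin G.n) {s : Finset (Fin G.R)} {e : Fin G.R}
    (he : e ∈ s) :
    G.load (Function.update a i s) e = if e ∈ a i then G.load a e else G.load a e + 1 := by
  have h := G.load_update_add a i s e
  split_ifs at h ⊢ <;> omega

lemma sum_Icc_load_update_sub (a : G.Assign) (i : Fin G.n) (s : Finset (Fin G.R))
    (e : Fin G.R) (g : ℕ → ℝ) :
    ∑ k ∈ Finset.Icc 1 (G.load (Function.update a i s) e), g k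
        - ∑ k ∈ Finset.Icc 1 (G.load a e), g k
      = (if e ∈ s then g (G.load (Function.update a i s) e) else 0)
        - (if e ∈ a i then g (G.load a e) else 0) := by
  have h := G.load_update_add a i s e
  by_cases hs : e ∈ s <;> by_cases ha : e ∈ a i <;> simp only [hs, ha, if_true, if_false] at h ⊢
  · rw [show G.load (Function.update a i s) e = G.load a e by omega]; ring
  · rw [show G.load (Function.update a i s) e = G.load a e + 1 by omega,
      Finset.sum_Icc_succ_top (by omega)]
    ring
  · rw [← show G.load (Function.update a i s) e + 1 = G.load a e by omega,
      Finset.sum_Icc_succ_top (by omega)]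
    ring
  · rw [show G.load (Function.update a i s) e = G.load a e by omega]; ring

lemma potential_update_sub (a : G.Assign) (i : Fin G.n) (s : Finset (Fin G.R)) :
    G.potential (Function.update a i s) - G.potential a
      = G.userCost i (Function.update a i s) - G.userCost i a := by
  rw [potential, potential, ← Finset.sum_sub_distrib]
  simp_rw [G.sum_Icc_load_update_sub]
  rw [Finset.sum_sub_distrib, Finset.sum_ite_mem, Finset.sum_ite_mem, Finset.univ_inter,
    Finset.univ_inter, userCost, userCost, Function.update_self]

lemma isNE_of_forall_potential_le {a : G.Assign} (ha : G.IsAssign a)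
    (hmin : ∀ a', G.IsAssign a' → G.potential a ≤ G.potential a') : G.IsNE a := by
  refine ⟨ha, fun i s hs => ?_⟩
  have hdev : G.IsAssign (Function.update a i s) := by
    intro k
    rcases eq_or_ne k i with rfl | hk
    · simpa using hs
    · simpa [Function.update_of_ne hk] using ha k
  linarith [hmin _ hdev, G.potential_update_sub a i s]

lemma exists_isNE_forall_potential_le :
    ∃ a, G.IsNE a ∧ ∀ a', G.IsAssign a' → G.potential a ≤ G.potential a' := by
  obtain ⟨a, ha, hmin⟩ := Set.exists_min_image {a | G.IsAssign a} G.potential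
    (Set.toFinite _) G.exists_isAssign
  exact ⟨a, G.isNE_of_forall_potential_le ha hmin, hmin⟩

lemma sum_sum_ite_mem (a o : G.Assign) (u v : Fin G.R → ℝ) :
    ∑ i, ∑ e ∈ o i, (if e ∈ a i then u e else v e)
      = ∑ e, ((G.load (a ⊓ o) e : ℝ) * u e + ((G.load o e : ℝ) - G.load (a ⊓ o) e) * v e) := by
  have hsplit : ∀ i, ∑ e ∈ o i, (if e ∈ a i then u e else v e)
      = ∑ e ∈ o i, v e + ∑ e ∈ (a ⊓ o) i, (u e - v e) := by
    intro i
    rw [Pi.inf_apply, Finset.inf_eq_inter, Finset.inter_comm, ← Finset.sum_ite_mem,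
      ← Finset.sum_add_distrib]
    exact Finset.sum_congr rfl fun e _ => by split_ifs <;> ring
  rw [Finset.sum_congr rfl fun i _ => hsplit i, Finset.sum_add_distrib,
    G.sum_sum_eq_sum_load_mul, G.sum_sum_eq_sum_load_mul, ← Finset.sum_add_distrib]
  exact Finset.sum_congr rfl fun e _ => by ring

lemma userCost_update_self (a : G.Assign) (i : Fin G.n) (s : Finset (Fin G.R)) :
    G.userCost i (Function.update a i s)
      = ∑ e ∈ s, (if e ∈ a i then G.cost e (G.load a e) + G.tax e (G.load a e)
          else G.cost e (G.load a e + 1) + G.tax e (G.load a e + 1)) := by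
  rw [userCost, Function.update_self]
  refine Finset.sum_congr rfl fun e he => ?_
  rw [G.load_update_of_mem a i he]
  split_ifs <;> rfl

lemma sum_deviation_nonpos_of_isNE {a : G.Assign} (ha : G.IsNE a) {o : G.Assign}
    (ho : G.IsAssign o) :
    ∑ e, (((G.load a e : ℝ) - G.load (a ⊓ o) e)
          * (G.cost e (G.load a e) + G.tax e (G.load a e))
        - ((G.load o e : ℝ) - G.load (a ⊓ o) e)
          * (G.cost e (G.load a e + 1) + G.tax e (G.load a e + 1))) ≤ 0 := by
  have hsum : ∑ i, G.userCost i a ≤ ∑ i, G.userCost i (Function.update a i (o i)) :=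
    Finset.sum_le_sum fun i _ => ha.2 i (o i) (ho i)
  simp only [userCost_update_self] at hsum
  rw [G.sum_sum_ite_mem] at hsum
  simp only [userCost] at hsum
  rw [G.sum_sum_eq_sum_load_mul, ← sub_nonpos, ← Finset.sum_sub_distrib] at hsum
  convert hsum using 2 with e
  ring

end CGame

/-- The left-hand side of the paper's constraints: for `ℓ = b_j` and `f = F_j`,
`slack (1/ν) (ρ/ν) 0` is the PoA constraint and `slack 1 γ κ` the PoS constraint. -/
def slack (μ θ κ : ℝ) (ℓ f : ℕ → ℝ) (x y z : ℕ) : ℝ :=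
  μ * (ℓ y * y) - θ * (ℓ x * x) + ((x : ℝ) - z) * f x - ((y : ℝ) - z) * f (x + 1)
    + κ * (∑ k ∈ Finset.Icc 1 x, f k - ∑ k ∈ Finset.Icc 1 y, f k)

/-- The set `I(n)`. -/
def indexTriples (n : ℕ) : Set (ℕ × ℕ × ℕ) :=
  {t | t.1 ≤ n ∧ t.2.1 ≤ n ∧ t.2.2 ≤ t.1 ∧ t.2.2 ≤ t.2.1 ∧
    1 ≤ t.1 + t.2.1 - t.2.2 ∧ t.1 + t.2.1 - t.2.2 ≤ n}

lemma slack_zero (μ θ κ : ℝ) (ℓ f : ℕ → ℝ) : slack μ θ κ ℓ f 0 0 0 = 0 := by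
  simp [slack]

lemma slack_sum_mul {ι : Type*} (s : Finset ι) (α : ι → ℝ) (μ θ κ : ℝ) (ℓ f : ι → ℕ → ℝ)
    (x y z : ℕ) :
    slack μ θ κ (fun k => ∑ j ∈ s, α j * ℓ j k) (fun k => ∑ j ∈ s, α j * f j k) x y z
      = ∑ j ∈ s, α j * slack μ θ κ (ℓ j) (f j) x y z := by
  simp only [slack, Finset.sum_comm (s := Finset.Icc 1 _) (t := s), Finset.sum_mul,
    Finset.mul_sum, ← Finset.sum_sub_distrib, ← Finset.sum_add_distrib]
  exact Finset.sum_congr rfl fun j _ => by rw [← Finset.mul_sum, ← Finset.mul_sum]; ring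

namespace CGame

variable (G : CGame)

lemma load_mem_indexTriples {n : ℕ} (hn : G.n ≤ n) (a o : G.Assign) (e : Fin G.R) :
    (G.load a e, G.load o e, G.load (a ⊓ o) e) ∈ indexTriples n ∨
      (G.load a e = 0 ∧ G.load o e = 0 ∧ G.load (a ⊓ o) e = 0) := by
  have hzx := G.load_mono (inf_le_left : a ⊓ o ≤ a) e
  have hzy := G.load_mono (inf_le_right : a ⊓ o ≤ o) e
  have hsum := G.load_inf_add_load_sup a o e
  have hsup := G.load_le (a ⊔ o) e
  have hx := G.load_le a e
  have hy := G.load_le o e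
  by_cases h0 : G.load a e = 0 ∧ G.load o e = 0
  · exact Or.inr ⟨h0.1, h0.2, by omega⟩
  · refine Or.inl ⟨?_, ?_, ?_, ?_, ?_, ?_⟩ <;> dsimp only <;> omega

lemma sum_slack_le_of_isNE (μ θ κ : ℝ) {a : G.Assign} (ha : G.IsNE a) {o : G.Assign}
    (ho : G.IsAssign o) :
    ∑ e, slack μ θ κ (G.cost e) (fun k => G.cost e k + G.tax e k)
        (G.load a e) (G.load o e) (G.load (a ⊓ o) e)
      ≤ μ * G.SC o - θ * G.SC a + κ * (G.potential a - G.potential o) := by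
  have hdev := G.sum_deviation_nonpos_of_isNE ha ho
  rw [SC, SC, G.sum_sum_eq_sum_load_mul, G.sum_sum_eq_sum_load_mul, potential, potential]
  simp only [slack, Finset.mul_sum, ← Finset.sum_sub_distrib, ← Finset.sum_add_distrib] at hdev ⊢
  rw [← sub_nonpos, ← Finset.sum_sub_distrib]
  convert hdev using 2
  ring

end CGame

lemma InClass.slack_nonneg {n m : ℕ} {b : Fin m → ℕ → ℝ} {T : Mech} {G : CGame}
    (hG : InClass n m b T G) {F : Fin m → ℕ → ℝ}
    (hT : ∀ α : Fin m → ℝ, (∀ j, 0 ≤ α j) →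
      ∀ x, T (fun y => ∑ j, α j * b j y) x = ∑ j, α j * (F j x - b j x))
    {μ θ κ : ℝ}
    (hslack : ∀ j, ∀ t ∈ indexTriples n, 0 ≤ slack μ θ κ (b j) (F j) t.1 t.2.1 t.2.2)
    {a : G.Assign} (ha : G.IsNE a) {o : G.Assign} (ho : G.IsAssign o) :
    0 ≤ μ * G.SC o - θ * G.SC a + κ * (G.potential a - G.potential o) := by
  obtain ⟨hn, hcost, htax⟩ := hG
  choose α hα hcost using hcost
  have hℓ : ∀ e, G.cost e = fun k => ∑ j, α e j * b j k := fun e => funext (hcost e)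
  have hf : ∀ e, (fun k => G.cost e k + G.tax e k) = fun k => ∑ j, α e j * F j k := by
    refine fun e => funext fun k => ?_
    rw [htax, hℓ e, hT _ (hα e), ← Finset.sum_add_distrib]
    exact Finset.sum_congr rfl fun j _ => by ring
  refine (Finset.sum_nonneg fun e _ => ?_).trans (G.sum_slack_le_of_isNE μ θ κ ha ho)
  rcases G.load_mem_indexTriples hn a o e with ht | ⟨hx, hy, hz⟩
  · rw [hf e, hℓ e, slack_sum_mul]
    exact Finset.sum_nonneg fun j _ => mul_nonneg (hα e j) (hslack j _ ht)
  · rw [hx, hy, hz, slack_zero]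

lemma PoA_le_of_forall_isNE {n m : ℕ} {b : Fin m → ℕ → ℝ} {T : Mech} {ρ : ℝ} (hρ : 0 < ρ)
    (h : ∀ G, InClass n m b T G → ∀ a, G.IsNE a → ∀ o, G.IsAssign o → ρ * G.SC a ≤ G.SC o) :
    PoA n m b T ≤ ENNReal.ofReal (1 / ρ) := by
  refine iSup_le fun G => iSup_le fun ⟨hG, hM⟩ => iSup_le fun a => iSup_le fun ha =>
    ENNReal.ofReal_le_ofReal ?_
  rw [div_le_div_iff₀ hM hρ, one_mul, mul_comm]
  exact G.le_minCost fun o ho => h G hG a ha o ho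

lemma PoS_le_of_forall_potential_le {n m : ℕ} {b : Fin m → ℕ → ℝ} {T : Mech} {γ : ℝ}
    (hγ : 0 < γ)
    (h : ∀ G, InClass n m b T G → ∀ a, G.IsNE a → ∀ o, G.IsAssign o →
      G.potential a ≤ G.potential o → γ * G.SC a ≤ G.SC o) :
    PoS n m b T ≤ ENNReal.ofReal (1 / γ) := by
  refine iSup_le fun G => iSup_le fun ⟨hG, hM⟩ => ?_
  obtain ⟨a, ha, hmin⟩ := G.exists_isNE_forall_potential_le
  refine iInf_le_of_le ⟨a, ha⟩ (ENNReal.ofReal_le_ofReal ?_)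
  rw [div_le_div_iff₀ hM hγ, one_mul, mul_comm]
  exact G.le_minCost fun o ho => h G hG a ha o ho (hmin o ho)

theorem bilinear_program_gives_PoA_and_PoS_bounds_general
    (n m : ℕ)
    (b : Fin m → ℕ → ℝ)
    (PoAstar : ℝ) (hPoAstar : 1 ≤ PoAstar)
    (ν ρ γ κ : ℝ)
    (hν : 0 < ν) (hρ : 1 / PoAstar ≤ ρ) (hγ0 : 0 < γ) (hκ : 0 < κ)
    (F : Fin m → ℕ → ℝ)
    (hfeasPoA : ∀ j, ∀ x y z : ℕ, x ≤ n → y ≤ n → z ≤ x → z ≤ y →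
      1 ≤ x + y - z → x + y - z ≤ n →
      (1 / ν) * (b j y * y) - (ρ / ν) * (b j x * x)
        + ((x : ℝ) - (z : ℝ)) * F j x - ((y : ℝ) - (z : ℝ)) * F j (x + 1) ≥ 0)
    (hfeasPoS : ∀ j, ∀ x y z : ℕ, x ≤ n → y ≤ n → z ≤ x → z ≤ y →
      1 ≤ x + y - z → x + y - z ≤ n →
      b j y * y - γ * (b j x * x)
        + ((x : ℝ) - (z : ℝ)) * F j x - ((y : ℝ) - (z : ℝ)) * F j (x + 1)
        + κ * ((∑ k ∈ Finset.Icc 1 x, F j k) - ∑ k ∈ Finset.Icc 1 y, F j k) ≥ 0)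
    (T : Mech)
    (hT : ∀ α : Fin m → ℝ, (∀ j, 0 ≤ α j) →
      ∀ x, T (fun y => ∑ j, α j * b j y) x = ∑ j, α j * (F j x - b j x)) :
    PoA n m b T ≤ ENNReal.ofReal (1 / ρ) ∧
    ENNReal.ofReal (1 / ρ) ≤ ENNReal.ofReal PoAstar ∧
    PoS n m b T ≤ ENNReal.ofReal (1 / γ) := by
  have hPoAstar0 : 0 < PoAstar := by linarith
  have hρ0 : 0 < ρ := (one_div_pos.2 hPoAstar0).trans_le hρ
  have hslackPoA : ∀ j, ∀ t ∈ indexTriples n,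
      0 ≤ slack (1 / ν) (ρ / ν) 0 (b j) (F j) t.1 t.2.1 t.2.2 := by
    rintro j ⟨x, y, z⟩ ⟨hx, hy, hzx, hzy, h1, h2⟩
    simpa [slack] using hfeasPoA j x y z hx hy hzx hzy h1 h2
  have hslackPoS : ∀ j, ∀ t ∈ indexTriples n, 0 ≤ slack 1 γ κ (b j) (F j) t.1 t.2.1 t.2.2 := by
    rintro j ⟨x, y, z⟩ ⟨hx, hy, hzx, hzy, h1, h2⟩
    simpa [slack] using hfeasPoS j x y z hx hy hzx hzy h1 h2
  refine ⟨PoA_le_of_forall_isNE hρ0 fun G hG a ha o ho => ?_, ENNReal.ofReal_le_ofReal ?_,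
    PoS_le_of_forall_potential_le hγ0 fun G hG a ha o ho hpot => ?_⟩
  · have h := hG.slack_nonneg hT hslackPoA ha ho
    rw [zero_mul, add_zero, sub_nonneg] at h
    calc ρ * G.SC a = ν * (ρ / ν * G.SC a) := by field_simp
      _ ≤ ν * (1 / ν * G.SC o) := by gcongr
      _ = G.SC o := by field_simp
  · calc 1 / ρ ≤ 1 / (1 / PoAstar) := one_div_le_one_div_of_le (by positivity) hρ
      _ = PoAstar := one_div_one_div _
  · linarith [hG.slack_nonneg hT hslackPoS ha ho, mul_nonneg hκ.le (sub_nonneg.2 hpot)]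

/-- Over congestion games with at most `n` users and costs
generated by positive basis functions, if `ν > 0`, `ρ ≥ 1/PoA*`, `γ ∈ (0,1]`,
`κ > 0` and the functions `F_j` satisfy both families of linear constraints
(over `I(n)`), then the linear local mechanism `T` with `T(b_j) = F_j − b_j`
satisfies `PoA(T) ≤ 1/ρ ≤ PoA*` and `PoS(T) ≤ 1/γ`. -/
theorem bilinear_program_gives_PoA_and_PoS_bounds
    (n m : ℕ)
    (b : Fin m → ℕ → ℝ)
    (hb0 : ∀ j, b j 0 = 0)
    (hbpos : ∀ j, ∀ x : ℕ, 1 ≤ x → x ≤ n → 0 < b j x)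
    (PoAstar : ℝ) (hPoAstar : 1 ≤ PoAstar)
    (ν ρ γ κ : ℝ)
    (hν : 0 < ν) (hρ : 1 / PoAstar ≤ ρ) (hγ0 : 0 < γ) (hγ1 : γ ≤ 1) (hκ : 0 < κ)
    (F : Fin m → ℕ → ℝ)
    (hF0 : ∀ j, F j 0 = 0) (hFn1 : ∀ j, F j (n + 1) = 0)
    (hfeasPoA : ∀ j, ∀ x y z : ℕ, x ≤ n → y ≤ n → z ≤ x → z ≤ y →
      1 ≤ x + y - z → x + y - z ≤ n →
      (1 / ν) * (b j y * y) - (ρ / ν) * (b j x * x)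
        + ((x : ℝ) - (z : ℝ)) * F j x - ((y : ℝ) - (z : ℝ)) * F j (x + 1) ≥ 0)
    (hfeasPoS : ∀ j, ∀ x y z : ℕ, x ≤ n → y ≤ n → z ≤ x → z ≤ y →
      1 ≤ x + y - z → x + y - z ≤ n →
      b j y * y - γ * (b j x * x)
        + ((x : ℝ) - (z : ℝ)) * F j x - ((y : ℝ) - (z : ℝ)) * F j (x + 1)
        + κ * ((∑ k ∈ Finset.Icc 1 x, F j k) - ∑ k ∈ Finset.Icc 1 y, F j k) ≥ 0)
    (T : Mech)
    (hT : ∀ α : Fin m → ℝ, (∀ j, 0 ≤ α j) →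
      ∀ x, T (fun y => ∑ j, α j * b j y) x = ∑ j, α j * (F j x - b j x)) :
    PoA n m b T ≤ ENNReal.ofReal (1 / ρ) ∧
    ENNReal.ofReal (1 / ρ) ≤ ENNReal.ofReal PoAstar ∧
    PoS n m b T ≤ ENNReal.ofReal (1 / γ) :=
  bilinear_program_gives_PoA_and_PoS_bounds_general n m b PoAstar hPoAstar ν ρ γ κ hν hρ hγ0 hκ F
    hfeasPoA hfeasPoS T hT
end
end
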